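/- Let A be an abelian category with enough projectives and injectives, (X, Y) a cotorsion pair in A. Then (X, Y) is hereditary (i.e., Ext^i_A(X', Y') = 0 for all i > 0, X' ∈ X, Y' ∈ Y) if and only if X is a resolving subcategory of A. -/

import Mathlib

open CategoryTheory CategoryTheory.Limits

universe w v u

namespace Paper

variable {C : Type u} [Category.{v} C] [Abelian C]

/-- A predicate on objects is closed under isomorphisms. -/
def IsoClosedP (P : C → Prop) : Prop := ∀ ⦃A B : C⦄, (A ≅ B) → P A → P B

/-- `P` is closed under extensions in the ambient abelian category. -/
def ClosedUnderExtensions (P : C → Prop) : Prop :=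
  ∀ (S : ShortComplex C), S.ShortExact → P S.X₁ → P S.X₃ → P S.X₂

/-- `P ⊆ E` is closed under conflations in `E` (short exact sequences all of whose
terms belong to `E`). -/
def ClosedUnderConflations (E P : C → Prop) : Prop :=
  ∀ (S : ShortComplex C), S.ShortExact → E S.X₁ → E S.X₂ → E S.X₃ →
    P S.X₁ → P S.X₃ → P S.X₂

/-- `P` is closed under admissible subobjects in `E`. -/
def ClosedUnderAdmissibleSubobjects (E P : C → Prop) : Prop :=
  ∀ (S : ShortComplex C), S.ShortExact → E S.X₁ → E S.X₂ → E S.X₃ →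
    P S.X₂ → P S.X₁

/-- `P` is closed under admissible quotients in `E`. -/
def ClosedUnderAdmissibleQuotients (E P : C → Prop) : Prop :=
  ∀ (S : ShortComplex C), S.ShortExact → E S.X₁ → E S.X₂ → E S.X₃ →
    P S.X₂ → P S.X₃

/-- `P` is a torsion-free class of the extension-closed subcategory `E`. -/
def IsTorsionFreeClassOf (E P : C → Prop) : Prop :=
  IsoClosedP P ∧ (∀ M, P M → E M) ∧ ClosedUnderConflations E P ∧
    ClosedUnderAdmissibleSubobjects E P

/-- `P` is a torsion class of the extension-closed subcategory `E`. -/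
def IsTorsionClassOf (E P : C → Prop) : Prop :=
  IsoClosedP P ∧ (∀ M, P M → E M) ∧ ClosedUnderConflations E P ∧
    ClosedUnderAdmissibleQuotients E P

/-- `F` is the smallest torsion-free class of `E` containing `X`. -/
def IsSmallestTorsionFreeClassOf (E X F : C → Prop) : Prop :=
  IsTorsionFreeClassOf E F ∧ (∀ M, X M → F M) ∧
    ∀ G, IsTorsionFreeClassOf E G → (∀ M, X M → G M) → ∀ M, F M → G M

/-- `F` is the smallest torsion class of `E` containing `X`. -/
def IsSmallestTorsionClassOf (E X F : C → Prop) : Prop :=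
  IsTorsionClassOf E F ∧ (∀ M, X M → F M) ∧
    ∀ G, IsTorsionClassOf E G → (∀ M, X M → G M) → ∀ M, F M → G M

/-- `X` is an `n`-fold torsion-free class of the ambient subcategory `Amb`. -/
def IsNFoldTorsionFreeClass (Amb X : C → Prop) (n : ℕ) : Prop :=
  ∃ F : ℕ → (C → Prop), F 0 = Amb ∧ F n = X ∧
    ∀ i, i < n → IsTorsionFreeClassOf (F i) (F (i+1))

/-- `X` is an `n`-fold torsion class of the ambient subcategory `Amb`. -/
def IsNFoldTorsionClass (Amb X : C → Prop) (n : ℕ) : Prop :=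
  ∃ T : ℕ → (C → Prop), T 0 = Amb ∧ T n = X ∧
    ∀ i, i < n → IsTorsionClassOf (T i) (T (i+1))

/-- `X` is closed under `m`-kernels: for every exact sequence
`0 → M → X^0 → ⋯ → X^m` with all `X^i ∈ X` we have `M ∈ X`. -/
def ClosedUnderNKernels (X : C → Prop) (m : ℕ) : Prop :=
  ∀ (F : ComposableArrows C (m+1)), F.Exact →
    Mono (F.map' 0 1 (by omega) (by omega)) →
    (∀ (i : ℕ) (hi : i ≤ m), X (F.obj ⟨i+1, by omega⟩)) →
    X (F.obj ⟨0, by omega⟩)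

/-- `M` has `X`-resolution dimension at most `j`: there is an exact sequence
`0 → X_j → ⋯ → X_0 → M → 0` with all `X_i ∈ X`. -/
def ResDimLE (X : C → Prop) (j : ℕ) (M : C) : Prop :=
  ∃ F : ComposableArrows C (j+1), F.Exact ∧
    Mono (F.map' 0 1 (by omega) (by omega)) ∧
    Epi (F.map' j (j+1) (by omega) (by omega)) ∧
    (∀ (i : ℕ) (hi : i ≤ j), X (F.obj ⟨i, by omega⟩)) ∧
    F.obj ⟨j+1, by omega⟩ = M


/-- `X` is a resolving subcategory: contains the projectives, closed under
extensions, direct summands and kernels of epimorphisms. -/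
def IsResolving (X : C → Prop) : Prop :=
  (∀ P : C, Projective P → X P) ∧ ClosedUnderExtensions X ∧
    (∀ A B : C, X (A ⊞ B) → X A) ∧
    (∀ ⦃A B : C⦄ (f : A ⟶ B), Epi f → X A → X B → X (kernel f))


section AuxVanishing

/-- A chain map from a single projective in degree 0 to a complex exact at 0
is zero in the homotopy category. -/
lemma aux_null_from_single (P : C) (hP : Projective P) (Z : CochainComplex C ℤ)
    (hZ : Z.ExactAt 0)
    (f : (HomologicalComplex.single C (ComplexShape.up ℤ) 0).obj P ⟶ Z) :
    (HomotopyCategory.quotient C (ComplexShape.up ℤ)).map f = 0 := by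
  haveI : Projective P := hP
  rw [HomologicalComplex.exactAt_iff' Z (-1) 0 1 (by simp) (by simp)] at hZ
  have hf0 : ((HomologicalComplex.singleObjXSelf (ComplexShape.up ℤ) 0 P).inv ≫ f.f 0) ≫
      (Z.sc' (-1) 0 1).g = 0 := by
    have := f.comm 0 1
    change ((HomologicalComplex.singleObjXSelf (ComplexShape.up ℤ) 0 P).inv ≫ f.f 0) ≫ Z.d 0 1 = 0
    rw [Category.assoc, this, HomologicalComplex.single_obj_d, zero_comp, comp_zero]
  obtain ⟨h', hh'⟩ : ∃ h' : P ⟶ Z.X (-1), h' ≫ Z.d (-1) 0 =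
      (HomologicalComplex.singleObjXSelf (ComplexShape.up ℤ) 0 P).inv ≫ f.f 0 :=
    ⟨hZ.liftFromProjective _ hf0, hZ.liftFromProjective_comp _ hf0⟩
  have H : Homotopy f 0 := {
    hom := fun i j => if hij : i = 0 ∧ j = -1 then
        (HomologicalComplex.singleObjXIsoOfEq (ComplexShape.up ℤ) 0 P i hij.1).hom ≫ h' ≫
          eqToHom (show Z.X (-1) = Z.X j by rw [hij.2])
      else 0
    zero := fun i j hij => by
      rw [dif_neg]
      rintro ⟨rfl, rfl⟩
      exact hij (by simp)
    comm := fun i => by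
      by_cases hi : i = 0
      · subst hi
        have hd : dNext 0 (fun i j => if hij : i = 0 ∧ j = -1 then
            (HomologicalComplex.singleObjXIsoOfEq (ComplexShape.up ℤ) 0 P i hij.1).hom ≫ h' ≫
              eqToHom (show Z.X (-1) = Z.X j by rw [hij.2]) else 0) = 0 := by
          dsimp [dNext]
          simp
        rw [hd, zero_add, HomologicalComplex.zero_f_apply, add_zero]
        have hc : (ComplexShape.up ℤ).prev 0 = -1 := by simp
        rw [prevD_eq _ (show (ComplexShape.up ℤ).Rel (-1) 0 by simp)]
        rw [dif_pos ⟨rfl, rfl⟩]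
        simp only [eqToHom_refl, Category.comp_id, Category.assoc, hh']
        simp [HomologicalComplex.singleObjXSelf]
      · apply (HomologicalComplex.isZero_single_obj_X (ComplexShape.up ℤ) 0 P i hi).eq_of_src
  }
  rw [HomotopyCategory.eq_of_homotopy f 0 H, Functor.map_zero]

/-- Any morphism in the derived category from a single projective in degree 0 to an
object with vanishing 0-th homology is zero. -/
lemma aux_hom_from_single_proj_eq_zero [HasDerivedCategory C] (P : C) (hP : Projective P)
    (T : DerivedCategory C) (hT : IsZero ((DerivedCategory.homologyFunctor C 0).obj T))
    (φ : (DerivedCategory.singleFunctor C 0).obj P ⟶ T) : φ = 0 := by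
  let W := HomotopyCategory.quasiIso C (ComplexShape.up ℤ)
  haveI : W.HasLeftCalculusOfFractions := by
    dsimp only [W]
    rw [HomotopyCategory.quasiIso_eq_subcategoryAcyclic_W]
    infer_instance
  haveI : DerivedCategory.Qh (C := C) |>.EssSurj := Localization.essSurj DerivedCategory.Qh W
  let A : HomotopyCategory C (ComplexShape.up ℤ) := (HomotopyCategory.singleFunctor C 0).obj P
  let B := DerivedCategory.Qh.objPreimage T
  let e : DerivedCategory.Qh.obj B ≅ T := DerivedCategory.Qh.objObjPreimageIso T
  have hφ : φ = (φ ≫ e.inv) ≫ e.hom := by simp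
  rw [hφ]
  have hψ : (φ ≫ e.inv : DerivedCategory.Qh.obj A ⟶ DerivedCategory.Qh.obj B) = 0 := by
    obtain ⟨fr, hfr⟩ := Localization.exists_leftFraction DerivedCategory.Qh W (φ ≫ e.inv)
    have hB : IsZero ((HomotopyCategory.homologyFunctor C (ComplexShape.up ℤ) 0).obj B) := by
      refine IsZero.of_iso ?_ ((DerivedCategory.homologyFunctorFactorsh C 0).symm.app B)
      exact IsZero.of_iso hT ((DerivedCategory.homologyFunctor C 0).mapIso e)
    have hsiso : IsIso ((HomotopyCategory.homologyFunctor C (ComplexShape.up ℤ) 0).map fr.s) :=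
      (HomotopyCategory.mem_quasiIso_iff fr.s).1 fr.hs 0
    have hY' : IsZero ((HomotopyCategory.homologyFunctor C (ComplexShape.up ℤ) 0).obj fr.Y') :=
      IsZero.of_iso hB (asIso ((HomotopyCategory.homologyFunctor C (ComplexShape.up ℤ) 0).map
        fr.s)).symm
    have hQhf : DerivedCategory.Qh.map fr.f = 0 := by
      obtain ⟨g, hg⟩ := (HomotopyCategory.quotient C (ComplexShape.up ℤ)).map_surjective fr.f
      have hex : (fr.Y'.as).ExactAt 0 := by
        rw [HomologicalComplex.exactAt_iff_isZero_homology]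
        exact IsZero.of_iso hY'
          ((HomotopyCategory.homologyFunctorFactors C (ComplexShape.up ℤ) 0).symm.app fr.Y'.as)
      have := aux_null_from_single P hP fr.Y'.as hex g
      have h2 : fr.f = 0 := hg.symm.trans this
      rw [h2, Functor.map_zero]
    have : fr.map DerivedCategory.Qh (Localization.inverts DerivedCategory.Qh W) = 0 := by
      have hinv := Localization.inverts DerivedCategory.Qh W fr.s fr.hs
      rw [← cancel_mono (DerivedCategory.Qh.map fr.s),
        MorphismProperty.LeftFraction.map_comp_map_s, hQhf, zero_comp]
    rw [hfr, this]
  rw [show φ ≫ e.inv = 0 from hψ, zero_comp]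

/-- Higher `Ext` groups out of a projective object vanish. -/
lemma aux_subsingleton_ext_proj [HasExt.{w} C] (P N : C) (hP : Projective P) (n : ℕ)
    (hn : n ≠ 0) : Subsingleton (Abelian.Ext P N n) := by
  letI := HasDerivedCategory.standard C
  suffices h : ∀ x : Abelian.Ext P N n, x = 0 from ⟨fun a b => by rw [h a, h b]⟩
  intro x
  apply Abelian.Ext.ext
  rw [Abelian.Ext.zero_hom]
  have h1 : IsZero (((DerivedCategory.homologyFunctor C 0).shift (n : ℤ)).obj
      ((DerivedCategory.singleFunctor C 0).obj N)) := by
    show IsZero ((DerivedCategory.homologyFunctor C (n : ℤ)).obj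
      ((DerivedCategory.singleFunctor C 0).obj N))
    refine IsZero.of_iso ?_ ((DerivedCategory.homologyFunctorFactorsh C (n : ℤ)).app
      ((HomotopyCategory.singleFunctor C 0).obj N))
    refine IsZero.of_iso ?_ ((HomotopyCategory.homologyFunctorFactors C (ComplexShape.up ℤ)
      (n : ℤ)).app ((HomologicalComplex.single C (ComplexShape.up ℤ) 0).obj N))
    exact HomologicalComplex.isZero_single_obj_homology _ 0 N _ (by exact_mod_cast hn)
  have hT : IsZero ((DerivedCategory.homologyFunctor C 0).obj
      (((DerivedCategory.singleFunctor C 0).obj N)⟦(n : ℤ)⟧)) :=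
    IsZero.of_iso h1 (((DerivedCategory.homologyFunctor C 0).isoShift (n : ℤ)).app _)
  exact aux_hom_from_single_proj_eq_zero P hP _ hT x.hom

end AuxVanishing

theorem statement11 [EnoughProjectives C] [EnoughInjectives C] [HasExt.{w} C]
    (X Y : C → Prop)
    (hX : ∀ M : C, X M ↔ ∀ N : C, Y N → Subsingleton (Abelian.Ext M N 1))
    (hY : ∀ N : C, Y N ↔ ∀ M : C, X M → Subsingleton (Abelian.Ext M N 1)) :
    (∀ i, 0 < i → ∀ M N : C, X M → Y N → Subsingleton (Abelian.Ext M N i)) ↔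
      IsResolving X := by
  constructor
  · intro h
    refine ⟨fun P hP => (hX P).mpr fun N hN => aux_subsingleton_ext_proj P N hP 1 one_ne_zero,
      ?_, ?_, ?_⟩
    · -- closed under extensions
      intro S hS h1 h3
      rw [hX]
      intro N hN
      haveI i1 := (hX S.X₁).mp h1 N hN
      haveI i3 := (hX S.X₃).mp h3 N hN
      suffices hz : ∀ x : Abelian.Ext S.X₂ N 1, x = 0 from ⟨fun a b => by rw [hz a, hz b]⟩
      intro x
      have hx : (Abelian.Ext.mk₀ S.f).comp x (zero_add 1) = 0 := Subsingleton.elim _ _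
      obtain ⟨x₁, hx₁⟩ := Abelian.Ext.contravariant_sequence_exact₂ hS N x hx
      rw [← hx₁, Subsingleton.elim x₁ 0, Abelian.Ext.comp_zero]
    · -- closed under direct summands
      intro A B hAB
      rw [hX]
      intro N hN
      haveI iAB := (hX (A ⊞ B)).mp hAB N hN
      suffices hz : ∀ x : Abelian.Ext A N 1, x = 0 from ⟨fun a b => by rw [hz a, hz b]⟩
      intro x
      have hx : x = (Abelian.Ext.mk₀ ((biprod.inl : A ⟶ A ⊞ B) ≫ biprod.fst)).comp x
          (zero_add 1) := by
        rw [biprod.inl_fst, Abelian.Ext.mk₀_id_comp]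
      rw [hx, ← Abelian.Ext.mk₀_comp_mk₀_assoc,
        Subsingleton.elim ((Abelian.Ext.mk₀ (biprod.fst : A ⊞ B ⟶ A)).comp x (zero_add 1)) 0,
        Abelian.Ext.comp_zero]
    · -- closed under kernels of epimorphisms
      intro A B f hf hA hB
      rw [hX]
      intro N hN
      haveI iA := (hX A).mp hA N hN
      haveI hepi : Epi f := hf
      have hS : (ShortComplex.mk (kernel.ι f) f (kernel.condition f)).ShortExact :=
        { exact := ShortComplex.exact_of_f_is_kernel _ (kernelIsKernel f) }
      haveI i2 := h 2 (by norm_num) B N hB hN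
      suffices hz : ∀ x : Abelian.Ext (kernel f) N 1, x = 0 from ⟨fun a b => by rw [hz a, hz b]⟩
      intro x
      have hx : hS.extClass.comp x (show 1 + 1 = 2 by norm_num) = 0 := Subsingleton.elim _ _
      obtain ⟨x₂, hx₂⟩ := Abelian.Ext.contravariant_sequence_exact₁ hS N x (show 1 + 1 = 2 by norm_num) hx
      rw [← hx₂, Subsingleton.elim x₂ 0, Abelian.Ext.comp_zero]
  · intro hres
    have key : ∀ i M N, X M → Y N → Subsingleton (Abelian.Ext M N (i + 1)) := by
      intro i
      induction i with
      | zero => exact fun M N hM hN => (hX M).mp hM N hN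
      | succ j ih =>
        intro M N hM hN
        have hP : Projective (Projective.over M) := Projective.projective_over M
        have hK : X (kernel (Projective.π M)) :=
          hres.2.2.2 (Projective.π M) inferInstance (hres.1 _ hP) hM
        have hS : (ShortComplex.mk (kernel.ι (Projective.π M)) (Projective.π M)
            (kernel.condition _)).ShortExact :=
          { exact := ShortComplex.exact_of_f_is_kernel _ (kernelIsKernel _) }
        suffices hz : ∀ x : Abelian.Ext M N (j + 2), x = 0 from ⟨fun a b => by rw [hz a, hz b]⟩
        intro x
        have h0 : (Abelian.Ext.mk₀ (Projective.π M)).comp x (zero_add _) = 0 := by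
          haveI := aux_subsingleton_ext_proj (Projective.over M) N hP (j + 2) (by omega)
          exact Subsingleton.elim _ _
        obtain ⟨x₁, hx₁⟩ := Abelian.Ext.contravariant_sequence_exact₃ hS N x h0 (show 1 + (j + 1) = j + 2 by omega)
        haveI := ih (kernel (Projective.π M)) N hK hN
        rw [← hx₁, Subsingleton.elim x₁ 0, Abelian.Ext.comp_zero]
    intro i hi M N hM hN
    obtain ⟨j, rfl⟩ : ∃ j, i = j + 1 := ⟨i - 1, by omega⟩
    exact key j M N hM hN
end Paper
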